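/- Suppose for every nontrivial additive character ψ of the finite field F_l one has |E[ψ(Z)]| ≤ C·|F_l|^{−α} for a random variable Z valued in F_l, with α > 0 and C ≥ 1. Let Z_1,...,Z_L be i.i.d. copies of Z and A ⊆ F_l a subset satisfying |Σ_{x∈A} ψ(−x)| ≤ |A|·|F_l|^{−β} for all nontrivial ψ, with β ≥ 0. Then |P(Z_1+...+Z_L ∈ A) − |A|/|F_l|| ≤ C^L · |A| · |F_l|^{−(Lα + β)} · (|F_l| − 1)/|F_l| ≤ C^L · |A|/|F_l| · |F_l|^{1 − Lα − β}. -/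

import Mathlib

/-!
Expand the indicator of `A` in additive characters: for `ψ = 0` the term is `|A|/|F_l|`, and
for `ψ ≠ 0` independence turns the character sum of `Z_1 + ... + Z_L` into the `L`-th power of
`E[ψ(Z)]`. Each of the `|F_l| - 1` nontrivial terms is then bounded by the two hypotheses.
-/

open Finset

namespace AddChar

variable {G : Type*} [AddCommGroup G]

lemma map_sum_eq_prod {ι R : Type*} [CommMonoid R] (ψ : AddChar G R) (s : Finset ι)
    (f : ι → G) : ψ (∑ i ∈ s, f i) = ∏ i ∈ s, ψ (f i) :=
  map_prod ψ.toMonoidHom (fun i => Multiplicative.ofAdd (f i)) s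

lemma sum_apply_sum_pi_eq_pow {Ω R : Type*} [Fintype Ω] [CommSemiring R] (ψ : AddChar G R)
    (Z : Ω → G) (L : ℕ) : ∑ ω : Fin L → Ω, ψ (∑ j, Z (ω j)) = (∑ ω, ψ (Z ω)) ^ L := by
  simp only [Fintype.sum_pow, map_sum_eq_prod]

variable [Fintype G] [DecidableEq G]

lemma card_filter_mem_mul_card_eq_sum {ι : Type*} [Fintype ι] (f : ι → G) (A : Finset G) :
    (#{i | f i ∈ A} : ℂ) * Fintype.card G =
      ∑ ψ : AddChar G ℂ, (∑ a ∈ A, ψ (-a)) * ∑ i, ψ (f i) := by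
  have orth (x a : G) :
      ∑ ψ : AddChar G ℂ, ψ (-a) * ψ x = if x = a then (Fintype.card G : ℂ) else 0 := by
    simp only [← map_add_eq_mul, neg_add_eq_sub, sum_apply_eq_ite, sub_eq_zero]
  calc (#{i | f i ∈ A} : ℂ) * Fintype.card G
      = ∑ i, if f i ∈ A then (Fintype.card G : ℂ) else 0 := by
        rw [← sum_filter, sum_const, nsmul_eq_mul]
    _ = ∑ i, ∑ a ∈ A, ∑ ψ : AddChar G ℂ, ψ (-a) * ψ (f i) := by
        simp only [orth, sum_ite_eq]
    _ = ∑ ψ : AddChar G ℂ, ∑ a ∈ A, ∑ i, ψ (-a) * ψ (f i) := by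
        rw [sum_comm, sum_congr rfl fun a _ => sum_comm, sum_comm]
    _ = _ := by simp only [sum_mul_sum]

variable {Ω : Type*} [Fintype Ω]

lemma card_filter_sum_mem_div_sub_eq [Nonempty Ω] (Z : Ω → G) (L : ℕ) (A : Finset G) :
    (#{ω : Fin L → Ω | ∑ j, Z (ω j) ∈ A} : ℂ) / Fintype.card Ω ^ L - #A / Fintype.card G =
      (1 / Fintype.card G : ℂ) * ∑ ψ ∈ univ.erase (0 : AddChar G ℂ),
        (∑ a ∈ A, ψ (-a)) * ((1 / Fintype.card Ω : ℂ) * ∑ ω, ψ (Z ω)) ^ L := by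
  have hG : (Fintype.card G : ℂ) ≠ 0 := Nat.cast_ne_zero.2 Fintype.card_ne_zero
  have hΩ : (Fintype.card Ω : ℂ) ≠ 0 := Nat.cast_ne_zero.2 Fintype.card_ne_zero
  have expand := card_filter_mem_mul_card_eq_sum (fun ω : Fin L → Ω => ∑ j, Z (ω j)) A
  simp only [sum_apply_sum_pi_eq_pow] at expand
  rw [← add_sum_erase _ _ (mem_univ 0)] at expand
  simp only [zero_apply, sum_const, nsmul_eq_mul, mul_one, card_univ] at expand
  have pull : ∑ ψ ∈ univ.erase (0 : AddChar G ℂ),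
      (∑ a ∈ A, ψ (-a)) * ((1 / Fintype.card Ω : ℂ) * ∑ ω, ψ (Z ω)) ^ L =
        (1 / Fintype.card Ω ^ L) * ∑ ψ ∈ univ.erase (0 : AddChar G ℂ),
          (∑ a ∈ A, ψ (-a)) * (∑ ω, ψ (Z ω)) ^ L := by
    rw [mul_sum]
    exact sum_congr rfl fun ψ _ => by ring
  rw [pull]
  field_simp
  linear_combination expand

lemma abs_card_filter_sum_mem_div_sub_le [Nonempty Ω] (Z : Ω → G) (L : ℕ) (A : Finset G)
    {a e : ℝ} (hZ : ∀ ψ : AddChar G ℂ, ψ ≠ 0 → ‖(1 / Fintype.card Ω : ℂ) * ∑ ω, ψ (Z ω)‖ ≤ e)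
    (hA : ∀ ψ : AddChar G ℂ, ψ ≠ 0 → ‖∑ x ∈ A, ψ (-x)‖ ≤ a) :
    |(#{ω : Fin L → Ω | ∑ j, Z (ω j) ∈ A} : ℝ) / Fintype.card Ω ^ L - #A / Fintype.card G| ≤
      a * e ^ L * (Fintype.card G - 1) / Fintype.card G := by
  have term (ψ : AddChar G ℂ) (hψ : ψ ∈ univ.erase (0 : AddChar G ℂ)) :
      ‖(∑ x ∈ A, ψ (-x)) * ((1 / Fintype.card Ω : ℂ) * ∑ ω, ψ (Z ω)) ^ L‖ ≤ a * e ^ L := by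
    have hψ := ne_of_mem_erase hψ
    rw [norm_mul, norm_pow]
    exact mul_le_mul (hA ψ hψ) (pow_le_pow_left₀ (norm_nonneg _) (hZ ψ hψ) L) (by positivity)
      ((norm_nonneg _).trans (hA ψ hψ))
  have hcard : (#(univ.erase (0 : AddChar G ℂ)) : ℝ) = Fintype.card G - 1 := by
    rw [card_erase_of_mem (mem_univ _), card_univ, card_eq, Nat.cast_pred Fintype.card_pos]
  rw [← Real.norm_eq_abs, ← Complex.norm_real]
  push_cast
  rw [card_filter_sum_mem_div_sub_eq, norm_mul]
  calc ‖(1 / Fintype.card G : ℂ)‖ * ‖∑ ψ ∈ univ.erase (0 : AddChar G ℂ),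
        (∑ a ∈ A, ψ (-a)) * ((1 / Fintype.card Ω : ℂ) * ∑ ω, ψ (Z ω)) ^ L‖
      ≤ 1 / Fintype.card G * (#(univ.erase (0 : AddChar G ℂ)) • (a * e ^ L)) := by
        rw [norm_div, norm_one, Complex.norm_natCast]
        gcongr
        exact (norm_sum_le _ _).trans (sum_le_card_nsmul _ _ _ term)
    _ = a * e ^ L * (Fintype.card G - 1) / Fintype.card G := by
        rw [nsmul_eq_mul, hcard]
        ring

end AddChar

theorem stmt14_general {Fl Ω : Type} [Field Fl] [Fintype Fl] [DecidableEq Fl]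
    [Fintype Ω] [Nonempty Ω] (Z : Ω → Fl) (L : ℕ)
    (α β C : ℝ) (hC : 1 ≤ C)
    (hZ : ∀ ψ : AddChar Fl ℂ, ψ ≠ 0 →
      ‖(1 / (Fintype.card Ω : ℂ)) * ∑ ω : Ω, ψ (Z ω)‖ ≤
        C * (Fintype.card Fl : ℝ) ^ (-α))
    (A : Finset Fl)
    (hA : ∀ ψ : AddChar Fl ℂ, ψ ≠ 0 →
      ‖∑ x ∈ A, ψ (-x)‖ ≤ (A.card : ℝ) * (Fintype.card Fl : ℝ) ^ (-β)) :
    |((Finset.univ.filter fun ω : Fin L → Ω => (∑ j, Z (ω j)) ∈ A).card : ℝ) /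
          (Fintype.card Ω : ℝ) ^ L - (A.card : ℝ) / (Fintype.card Fl : ℝ)| ≤
        C ^ L * (A.card : ℝ) * (Fintype.card Fl : ℝ) ^ (-((L : ℝ) * α + β)) *
          ((Fintype.card Fl : ℝ) - 1) / (Fintype.card Fl : ℝ) ∧
      C ^ L * (A.card : ℝ) * (Fintype.card Fl : ℝ) ^ (-((L : ℝ) * α + β)) *
          ((Fintype.card Fl : ℝ) - 1) / (Fintype.card Fl : ℝ) ≤
        C ^ L * (A.card : ℝ) / (Fintype.card Fl : ℝ) *
          (Fintype.card Fl : ℝ) ^ (1 - (L : ℝ) * α - β) := by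
  have bound := AddChar.abs_card_filter_sum_mem_div_sub_le Z L A hZ hA
  set q : ℝ := (Fintype.card Fl : ℝ)
  have hq : 0 < q := Nat.cast_pos.2 Fintype.card_pos
  have exponents : (A.card : ℝ) * q ^ (-β) * (C * q ^ (-α)) ^ L =
      C ^ L * (A.card : ℝ) * q ^ (-((L : ℝ) * α + β)) := by
    rw [mul_pow, ← Real.rpow_mul_natCast hq.le, neg_add, Real.rpow_add hq, neg_mul, mul_comm α]
    ring
  rw [exponents] at bound
  refine ⟨bound, ?_⟩
  have hX : 0 ≤ C ^ L * (A.card : ℝ) * q ^ (-((L : ℝ) * α + β)) := by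
    have : 0 ≤ C := by linarith
    positivity
  calc _ ≤ C ^ L * (A.card : ℝ) * q ^ (-((L : ℝ) * α + β)) :=
        div_le_of_le_mul₀ hq.le hX (by nlinarith)
    _ = C ^ L * (A.card : ℝ) / q * q ^ (1 - (L : ℝ) * α - β) := by
      rw [show (1 : ℝ) - L * α - β = -((L : ℝ) * α + β) + 1 by ring, Real.rpow_add hq,
        Real.rpow_one]
      field_simp

theorem stmt14 {Fl Ω : Type} [Field Fl] [Fintype Fl] [DecidableEq Fl]
    [Fintype Ω] [Nonempty Ω] (Z : Ω → Fl) (L : ℕ) (hL : 1 ≤ L)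
    (α β C : ℝ) (hα : 0 < α) (hβ : 0 ≤ β) (hC : 1 ≤ C)
    (hZ : ∀ ψ : AddChar Fl ℂ, ψ ≠ 0 →
      ‖(1 / (Fintype.card Ω : ℂ)) * ∑ ω : Ω, ψ (Z ω)‖ ≤
        C * (Fintype.card Fl : ℝ) ^ (-α))
    (A : Finset Fl)
    (hA : ∀ ψ : AddChar Fl ℂ, ψ ≠ 0 →
      ‖∑ x ∈ A, ψ (-x)‖ ≤ (A.card : ℝ) * (Fintype.card Fl : ℝ) ^ (-β)) :
    |((Finset.univ.filter fun ω : Fin L → Ω => (∑ j, Z (ω j)) ∈ A).card : ℝ) /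
          (Fintype.card Ω : ℝ) ^ L - (A.card : ℝ) / (Fintype.card Fl : ℝ)| ≤
        C ^ L * (A.card : ℝ) * (Fintype.card Fl : ℝ) ^ (-((L : ℝ) * α + β)) *
          ((Fintype.card Fl : ℝ) - 1) / (Fintype.card Fl : ℝ) ∧
      C ^ L * (A.card : ℝ) * (Fintype.card Fl : ℝ) ^ (-((L : ℝ) * α + β)) *
          ((Fintype.card Fl : ℝ) - 1) / (Fintype.card Fl : ℝ) ≤
        C ^ L * (A.card : ℝ) / (Fintype.card Fl : ℝ) *
          (Fintype.card Fl : ℝ) ^ (1 - (L : ℝ) * α - β) :=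
  stmt14_general Z L α β C hC hZ A hA
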